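/- Let a be a symmetric 4×4 real matrix of signature (+,−,−,−) and b ∈ ℝ⁴ with 0 ≤ ⟨b,b⟩ := a⁻¹(b,b) < 1. Then the matrix a_{ij} − b_i b_j also has signature (+,−,−,−). -/
import Mathlib


open Matrix

/-- `a` has Lorentzian signature `(+,-,-,-)`. -/
def IsLorentzian (a : Matrix (Fin 4) (Fin 4) ℝ) : Prop :=
  ∃ P : Matrix (Fin 4) (Fin 4) ℝ, IsUnit P.det ∧
    Pᵀ * a * P = Matrix.diagonal ![1, -1, -1, -1]

section Aux

variable {n : Type*} [Fintype n] [DecidableEq n]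

lemma aux_mul_vecMulVec (A : Matrix n n ℝ) (v w : n → ℝ) :
    A * vecMulVec v w = vecMulVec (A *ᵥ v) w := by
  ext i j
  simp [Matrix.mul_apply, vecMulVec_apply, Matrix.mulVec, dotProduct, Finset.sum_mul, mul_assoc]

lemma aux_vecMulVec_mul (v w : n → ℝ) (A : Matrix n n ℝ) :
    vecMulVec v w * A = vecMulVec v (w ᵥ* A) := by
  ext i j
  simp [Matrix.mul_apply, vecMulVec_apply, Matrix.vecMul, dotProduct, Finset.mul_sum, mul_assoc]

lemma aux_vecMulVec_vecMulVec (v w x y : n → ℝ) :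
    vecMulVec v w * vecMulVec x y = (w ⬝ᵥ x) • vecMulVec v y := by
  ext i j
  simp only [Matrix.mul_apply, vecMulVec_apply, Matrix.smul_apply, dotProduct,
    Finset.sum_mul, smul_eq_mul]
  exact Finset.sum_congr rfl fun k _ => by ring

lemma aux_vecMulVec_transpose (v w : n → ℝ) :
    (vecMulVec v w)ᵀ = vecMulVec w v := by
  ext i j
  simp [vecMulVec_apply, mul_comm]

lemma aux_vecMulVec_mulVec (v w x : n → ℝ) :
    vecMulVec v w *ᵥ x = (w ⬝ᵥ x) • v := by
  ext i
  simp only [vecMulVec_apply, Matrix.mulVec, dotProduct, Pi.smul_apply, smul_eq_mul,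
    Finset.sum_mul]
  exact Finset.sum_congr rfl fun k _ => by ring

lemma aux_vecMulVec_add_left (v w x : n → ℝ) :
    vecMulVec (v + w) x = vecMulVec v x + vecMulVec w x := by
  ext i j
  simp [vecMulVec_apply, add_mul]

lemma aux_vecMulVec_smul_left (t : ℝ) (v w : n → ℝ) :
    vecMulVec (t • v) w = t • vecMulVec v w := by
  ext i j
  simp [vecMulVec_apply, mul_assoc]

lemma aux_smul_vecMulVec (t : ℝ) (v w : n → ℝ) :
    t • vecMulVec v w = vecMulVec (t • v) w := by
  ext i j
  simp [vecMulVec_apply, mul_assoc]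

end Aux

/-- Signature stability for the Randers cone matrix: if `a` is symmetric of
signature `(+,-,-,-)` and `0 ≤ ⟨b,b⟩ = a⁻¹(b,b) < 1`, then `a - b bᵀ` also
has signature `(+,-,-,-)`. -/
theorem randers_matrix_lorentzian
    (a : Matrix (Fin 4) (Fin 4) ℝ) (ha : a.IsSymm) (hL : IsLorentzian a)
    (b : Fin 4 → ℝ) (hb0 : 0 ≤ b ⬝ᵥ (a⁻¹ *ᵥ b)) (hb1 : b ⬝ᵥ (a⁻¹ *ᵥ b) < 1) :
    IsLorentzian (a - vecMulVec b b) := by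
  obtain ⟨P, hP, hPaP⟩ := hL
  set η : Matrix (Fin 4) (Fin 4) ℝ := Matrix.diagonal ![1, -1, -1, -1] with hηdef
  have hη2 : η * η = 1 := by
    ext i j
    fin_cases i <;> fin_cases j <;>
      simp [hηdef, Matrix.mul_apply, Fin.sum_univ_four, Matrix.one_apply]
  have hηT : ηᵀ = η := Matrix.diagonal_transpose _
  haveI : Invertible Pᵀ := Pᵀ.invertibleOfIsUnitDet (by rwa [Matrix.det_transpose])
  -- compute a⁻¹
  have key : a * (P * η * Pᵀ) = 1 := by
    have h1 : Pᵀ * (a * (P * η * Pᵀ)) = Pᵀ := by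
      calc Pᵀ * (a * (P * η * Pᵀ)) = Pᵀ * a * P * η * Pᵀ := by
            simp only [Matrix.mul_assoc]
        _ = η * η * Pᵀ := by rw [hPaP, Matrix.mul_assoc η η Pᵀ, ← Matrix.mul_assoc η η Pᵀ]
        _ = Pᵀ := by rw [hη2, Matrix.one_mul]
    have h2 := congrArg (fun X => ⅟Pᵀ * X) h1
    simpa only [← Matrix.mul_assoc, invOf_mul_self, Matrix.one_mul] using h2
  have hainv : a⁻¹ = P * η * Pᵀ := Matrix.inv_eq_right_inv key
  set c : Fin 4 → ℝ := Pᵀ *ᵥ b with hcdef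
  have hs : b ⬝ᵥ (a⁻¹ *ᵥ b) = c ⬝ᵥ (η *ᵥ c) := by
    rw [hainv, ← Matrix.mulVec_mulVec, ← Matrix.mulVec_mulVec, Matrix.dotProduct_mulVec,
      ← Matrix.mulVec_transpose]
  set s : ℝ := c ⬝ᵥ (η *ᵥ c) with hsdef
  rw [hs] at hb0 hb1
  set u : Fin 4 → ℝ := η *ᵥ c with hudef
  have hηu : η *ᵥ u = c := by
    rw [hudef, Matrix.mulVec_mulVec, hη2, Matrix.one_mulVec]
  have huη : u ᵥ* η = c := by rw [← hηT, Matrix.vecMul_transpose, hηu]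
  have hcu : c ⬝ᵥ u = s := rfl
  set t : ℝ := if s = 0 then -(1/2) else (Real.sqrt (1 - s) - 1) / s with htdef
  have hsqrt : Real.sqrt (1 - s) ^ 2 = 1 - s := Real.sq_sqrt (by linarith)
  have hsqrtpos : 0 < Real.sqrt (1 - s) := Real.sqrt_pos.mpr (by linarith)
  have ht : s * t ^ 2 + 2 * t + 1 = 0 := by
    rcases eq_or_ne s 0 with h0 | h0
    · rw [htdef, if_pos h0, h0]; norm_num
    · rw [htdef, if_neg h0]
      field_simp
      nlinarith [hsqrt]
  have hts : 0 < 1 + t * s := by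
    rcases eq_or_ne s 0 with h0 | h0
    · rw [h0]; norm_num
    · rw [htdef, if_neg h0, div_mul_cancel₀ _ h0]
      linarith
  set M : Matrix (Fin 4) (Fin 4) ℝ := 1 + t • vecMulVec u c with hMdef
  have hMdet : M.det = 1 + t * s := by
    rw [hMdef, aux_smul_vecMulVec, vecMulVec_eq (Fin 1),
      Matrix.det_one_add_replicateCol_mul_replicateRow, dotProduct_smul, smul_eq_mul, hcu]
  have hMunit : IsUnit M.det := by
    rw [hMdet]; exact (isUnit_iff_ne_zero).mpr (by linarith)
  have hMTM : Mᵀ * η * M = η - vecMulVec c c := by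
    have expand : Mᵀ * η * M = η + (s * t ^ 2 + 2 * t) • vecMulVec c c := by
      rw [hMdef]
      simp only [Matrix.transpose_add, Matrix.transpose_one, Matrix.transpose_smul,
        aux_vecMulVec_transpose, Matrix.add_mul, Matrix.mul_add, Matrix.one_mul,
        Matrix.mul_one, Matrix.smul_mul, Matrix.mul_smul, aux_vecMulVec_mul,
        aux_mul_vecMulVec, huη, hηu, aux_vecMulVec_vecMulVec, hcu, smul_smul,
        Matrix.add_mulVec, aux_vecMulVec_mulVec, Matrix.smul_mulVec,
        aux_vecMulVec_add_left, aux_vecMulVec_smul_left]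
      module
    have hcoef : s * t ^ 2 + 2 * t = -1 := by linarith
    rw [expand, hcoef, neg_one_smul, sub_eq_add_neg]
  have hPcong : Pᵀ * (a - vecMulVec b b) * P = Mᵀ * η * M := by
    rw [Matrix.mul_sub, Matrix.sub_mul, hMTM]
    rw [hPaP, aux_mul_vecMulVec, aux_vecMulVec_mul, ← Matrix.mulVec_transpose]
  refine ⟨P * M⁻¹, ?_, ?_⟩
  · rw [Matrix.det_mul]
    exact hP.mul (M.isUnit_nonsing_inv_det hMunit)
  · calc (P * M⁻¹)ᵀ * (a - vecMulVec b b) * (P * M⁻¹)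
        = (M⁻¹)ᵀ * (Pᵀ * (a - vecMulVec b b) * P) * M⁻¹ := by
          rw [Matrix.transpose_mul]; simp only [Matrix.mul_assoc]
      _ = (M⁻¹)ᵀ * (Mᵀ * η * M) * M⁻¹ := by rw [hPcong]
      _ = (Mᵀ)⁻¹ * Mᵀ * (η * (M * M⁻¹)) := by
          rw [Matrix.transpose_nonsing_inv]; simp only [Matrix.mul_assoc]
      _ = η := by
          rw [Matrix.nonsing_inv_mul _ (by rwa [Matrix.det_transpose]),
            Matrix.mul_nonsing_inv _ hMunit, Matrix.one_mul, Matrix.mul_one]
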